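/- Define binomials g_{ij} = x_i y_j - x_j y_i for 1 ≤ i < j ≤ n, and cubics h^{(1)}_{ijk} = x_i z_j x_k - z_i x_j x_k, h^{(2)}_{ijk} = y_i z_j y_k - z_i y_j y_k, h^{(3)}_{ijk} = y_i z_j x_k - z_i y_j x_k for 1 ≤ i < j < k ≤ n. Then these binomials form a Gröbner basis of the ideal L_n they generate with respect to the lexicographic order with x_1 ≻ ... ≻ x_n ≻ y_1 ≻ ... ≻ y_n ≻ z_1 ≻ ... ≻ z_n; in particular the initial ideal of L_n equals N_n = ⟨x_i y_j : i<j⟩ + ⟨x_i z_j x_k, y_i z_j y_k, y_i z_j x_k : i<j<k⟩. -/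

import Mathlib

/-!
Every generator of `L_n` is a binomial `u - v` whose two monomials, multiplied by any monomial,
have the same `weight`: the total `x`- and `y`-degrees, the degree in each index `i`
(`x_i`, `y_i`, `z_i` together), and the exponents of those `z_l` with no `x_t` or `y_t`, `t > l`.
Summing the coefficients of `f ∈ L_n` over the weight classes therefore gives zero, so every
monomial of `f` shares its weight with another monomial of `f`. A monomial outside `N_n` is the
lex-smallest in its weight class, so it is never the leading monomial of an element of `L_n`.
Conversely, each generator of `N_n` is the leading monomial of the corresponding binomial.
-/

open MvPolynomial

noncomputable section

variable (K : Type*) [Field K] (n : ℕ)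

/-- The variable set: `(r, i)` is the `i`-th variable of block `r` (`r = 0,1,2` giving
`x_i, y_i, z_i`), ordered lexicographically so that
`x_1 < x_2 < ⋯ < x_n < y_1 < ⋯ < y_n < z_1 < ⋯ < z_n`
(the least variable has the highest precedence in the induced lex monomial order
`x_1 ≻ ⋯ ≻ x_n ≻ y_1 ≻ ⋯ ≻ y_n ≻ z_1 ≻ ⋯ ≻ z_n`). -/
abbrev σv (n : ℕ) := Lex (Fin 3 × Fin n)

def Xv (i : Fin n) : MvPolynomial (σv n) K := MvPolynomial.X (toLex (0, i))
def Yv (i : Fin n) : MvPolynomial (σv n) K := MvPolynomial.X (toLex (1, i))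
def Zv (i : Fin n) : MvPolynomial (σv n) K := MvPolynomial.X (toLex (2, i))

/-- The initial ideal of `I` for the lexicographic monomial order: the ideal generated
by the leading monomials (maximal support elements in the lexicographic order on
exponent vectors) of all nonzero elements of `I`. -/
def initialIdeal (I : Ideal (MvPolynomial (σv n) K)) : Ideal (MvPolynomial (σv n) K) :=
  Ideal.span {q | ∃ f ∈ I, ∃ d : (σv n) →₀ ℕ, d ∈ f.support ∧
    (∀ e ∈ f.support, toLex e ≤ toLex d) ∧ q = monomial d (1 : K)}

/-- The binomial ideal `L_n` generated by `x_i y_j - x_j y_i` (`i<j`) and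
`x_i z_j x_k - z_i x_j x_k`, `y_i z_j y_k - z_i y_j y_k`, `y_i z_j x_k - z_i y_j x_k`
(`i<j<k`). -/
def Lideal : Ideal (MvPolynomial (σv n) K) :=
  Ideal.span ({p | ∃ i j : Fin n, i < j ∧ p = Xv K n i * Yv K n j - Xv K n j * Yv K n i} ∪
    {p | ∃ i j k : Fin n, i < j ∧ j < k ∧
      (p = Xv K n i * Zv K n j * Xv K n k - Zv K n i * Xv K n j * Xv K n k ∨
       p = Yv K n i * Zv K n j * Yv K n k - Zv K n i * Yv K n j * Yv K n k ∨
       p = Yv K n i * Zv K n j * Xv K n k - Zv K n i * Yv K n j * Xv K n k)})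

/-- The monomial ideal `N_n` of leading terms of the generators of `L_n`. -/
def Nideal : Ideal (MvPolynomial (σv n) K) :=
  Ideal.span ({p | ∃ i j : Fin n, i < j ∧ p = Xv K n i * Yv K n j} ∪
    {p | ∃ i j k : Fin n, i < j ∧ j < k ∧
      (p = Xv K n i * Zv K n j * Xv K n k ∨
       p = Yv K n i * Zv K n j * Yv K n k ∨
       p = Yv K n i * Zv K n j * Xv K n k)})

theorem Finsupp.toLex_single_add_single_lt {α : Type*} [LinearOrder α] {a b u v : α}
    (hua : u < a) (hub : u < b) (huv : u ≤ v) :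
    toLex (single a 1 + single b 1) < toLex (single u 1 + single v 1) := by
  refine Finsupp.Lex.lt_iff.mpr ⟨u, fun w hw => ?_, ?_⟩
  · simp [(hw.trans hua).ne', (hw.trans hub).ne', hw.ne', (hw.trans_le huv).ne']
  · simp [single_apply, hua.ne', hub.ne']

theorem Finsupp.single_add_single_le {α : Type*} {d : α →₀ ℕ} {u v : α} (huv : u ≠ v)
    (hu : d u ≠ 0) (hv : d v ≠ 0) : single u 1 + single v 1 ≤ d := by
  classical
  intro a
  simp only [Finsupp.add_apply, Finsupp.single_apply]
  split_ifs <;> subst_vars <;> simp_all <;> omega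

theorem Finsupp.single_add_single_add_single_le {α : Type*} {d : α →₀ ℕ} {u v w : α}
    (huv : u ≠ v) (huw : u ≠ w) (hvw : v ≠ w) (hu : d u ≠ 0) (hv : d v ≠ 0)
    (hw : d w ≠ 0) :
    single u 1 + single v 1 + single w 1 ≤ d := by
  classical
  intro a
  simp only [Finsupp.add_apply, Finsupp.single_apply]
  split_ifs <;> subst_vars <;> simp_all <;> omega

theorem Finset.exists_gt_lt_of_sum_eq {ι M : Type*} [Fintype ι] [LinearOrder ι]
    [AddCommMonoid M] [LinearOrder M] [IsOrderedCancelAddMonoid M] {f g : ι → M}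
    (hs : ∑ l, f l = ∑ l, g l) {i : ι} (hi : g i < f i) (hbelow : ∀ l < i, f l = g l) :
    ∃ k, i < k ∧ f k < g k := by
  have : ∑ l ∈ univ.erase i, f l < ∑ l ∈ univ.erase i, g l := by
    rw [← add_sum_erase _ _ (mem_univ i), ← add_sum_erase _ _ (mem_univ i)] at hs
    by_contra! h
    exact (add_lt_add_of_lt_of_le hi h).ne' hs
  obtain ⟨k, hk, hlt⟩ := exists_lt_of_sum_lt this
  refine ⟨k, lt_of_le_of_ne (not_lt.mp fun hki => ?_) (Finset.ne_of_mem_erase hk).symm, hlt⟩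
  exact hlt.ne (hbelow k hki)

namespace MvPolynomial

variable {R σ β : Type*}

section CommSemiring

variable [CommSemiring R]

def fiberSum (φ : (σ →₀ ℕ) → β) : MvPolynomial σ R →+ (β →₀ R) :=
  (Finsupp.mapDomain.addMonoidHom φ).comp AddMonoidAlgebra.coeffAddEquiv.toAddMonoidHom

theorem fiberSum_monomial (φ : (σ →₀ ℕ) → β) (d : σ →₀ ℕ) (c : R) :
    fiberSum φ (monomial d c) = Finsupp.single (φ d) c :=
  Finsupp.mapDomain_single

theorem fiberSum_eq_zero_of_mem_span {φ : (σ →₀ ℕ) → β} {S : Set (MvPolynomial σ R)}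
    (hS : ∀ g ∈ S, ∀ p, fiberSum φ (p * g) = 0) {f : MvPolynomial σ R}
    (hf : f ∈ Ideal.span S) : fiberSum φ f = 0 := by
  suffices ∀ p, fiberSum φ (p * f) = 0 by simpa using this 1
  induction hf using Submodule.span_induction with
  | mem g hg => exact hS g hg
  | zero => simp
  | add f g _ _ hf hg => intro p; rw [mul_add, map_add, hf, hg, add_zero]
  | smul q f _ hf => intro p; rw [smul_eq_mul, ← mul_assoc]; exact hf (p * q)

theorem exists_mem_support_ne_of_fiberSum_eq_zero {φ : (σ →₀ ℕ) → β}
    {f : MvPolynomial σ R} (hf : fiberSum φ f = 0) {d : σ →₀ ℕ} (hd : d ∈ f.support) :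
    ∃ e ∈ f.support, e ≠ d ∧ φ e = φ d := by
  by_contra! hfib
  have : (fiberSum φ f) (φ d) = coeff d f := by
    rw [fiberSum, AddMonoidHom.comp_apply, Finsupp.mapDomain.addMonoidHom_apply,
      Finsupp.mapDomain, Finsupp.sum_apply, Finsupp.sum, Finset.sum_eq_single d]
    · exact Finsupp.single_eq_same
    · intro e he hed
      exact Finsupp.single_eq_of_ne (hfib e he hed).symm
    · intro hd'; exact absurd hd hd'
  rw [hf, Finsupp.zero_apply] at this
  exact mem_support_iff.mp hd this.symm

end CommSemiring

variable [CommRing R]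

theorem fiberSum_mul_monomial_sub_monomial {φ : (σ →₀ ℕ) → β} {a b : σ →₀ ℕ}
    (hab : ∀ m, φ (m + a) = φ (m + b)) (p : MvPolynomial σ R) :
    fiberSum φ (p * (monomial a 1 - monomial b 1)) = 0 := by
  induction p using induction_on' with
  | add p q hp hq => rw [add_mul, map_add, hp, hq, add_zero]
  | monomial m c =>
    rw [mul_sub, monomial_mul, monomial_mul, map_sub, fiberSum_monomial, fiberSum_monomial,
      hab, sub_self]

theorem mem_support_monomial_sub_monomial [LinearOrder σ] [Nontrivial R] {a b : σ →₀ ℕ}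
    (hba : toLex b < toLex a) :
    a ∈ (monomial a (1 : R) - monomial b 1).support ∧
      ∀ e ∈ (monomial a (1 : R) - monomial b 1).support, toLex e ≤ toLex a := by
  classical
  have hne : b ≠ a := fun h => hba.ne (by rw [h])
  refine ⟨by simp [coeff_monomial, hne], fun e he => ?_⟩
  rcases Finset.mem_union.mp (support_sub _ _ _ he) with he | he <;>
    obtain rfl := Finset.mem_singleton.mp (support_monomial_subset he)
  exacts [le_rfl, hba.le]

end MvPolynomial

namespace LnGroebner

variable {n : ℕ}

abbrev varExp (r : Fin 3) (i : Fin n) : σv n →₀ ℕ := Finsupp.single (toLex (r, i)) 1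

@[simp]
theorem varExp_apply (r s : Fin 3) (i l : Fin n) :
    varExp r i (toLex (s, l)) = if r = s ∧ i = l then 1 else 0 := by
  simp [Finsupp.single_apply, Prod.ext_iff]

def blockDeg (d : σv n →₀ ℕ) (r : Fin 3) : ℕ := ∑ i, d (toLex (r, i))

def indexDeg (d : σv n →₀ ℕ) (i : Fin n) : ℕ := ∑ r, d (toLex (r, i))

def XYFreeAbove (d : σv n →₀ ℕ) (l : Fin n) : Prop :=
  ∀ t, l < t → d (toLex (0, t)) = 0 ∧ d (toLex (1, t)) = 0

open Classical in
def tailZ (d : σv n →₀ ℕ) (l : Fin n) : ℕ :=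
  if XYFreeAbove d l then d (toLex (2, l)) else 0

def weight (d : σv n →₀ ℕ) : (Fin 3 → ℕ) × (Fin n → ℕ) × (Fin n → ℕ) :=
  (blockDeg d, indexDeg d, tailZ d)

@[simp]
theorem blockDeg_add (a b : σv n →₀ ℕ) : blockDeg (a + b) = blockDeg a + blockDeg b := by
  funext r; simp [blockDeg, Finset.sum_add_distrib]

@[simp]
theorem indexDeg_add (a b : σv n →₀ ℕ) : indexDeg (a + b) = indexDeg a + indexDeg b := by
  funext i; simp [indexDeg, Finset.sum_add_distrib]

@[simp]
theorem blockDeg_varExp (r : Fin 3) (i : Fin n) : blockDeg (varExp r i) = Pi.single r 1 := by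
  funext s; by_cases h : r = s <;> simp [blockDeg, h, eq_comm]

@[simp]
theorem indexDeg_varExp (r : Fin 3) (i : Fin n) : indexDeg (varExp r i) = Pi.single i 1 := by
  funext l; by_cases h : i = l <;> simp [indexDeg, h, eq_comm]

@[simp]
theorem xyFreeAbove_add {a b : σv n →₀ ℕ} {l : Fin n} :
    XYFreeAbove (a + b) l ↔ XYFreeAbove a l ∧ XYFreeAbove b l := by
  simp only [XYFreeAbove, Finsupp.add_apply, Nat.add_eq_zero_iff]
  grind

@[simp]
theorem xyFreeAbove_varExp {r : Fin 3} {i l : Fin n} :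
    XYFreeAbove (varExp r i) l ↔ r = 2 ∨ i ≤ l := by
  fin_cases r <;> simp [XYFreeAbove] <;> grind

theorem weight_add_eq_weight_add {a b : σv n →₀ ℕ} (hblock : blockDeg a = blockDeg b)
    (hindex : indexDeg a = indexDeg b) (hfree : ∀ l, XYFreeAbove a l ↔ XYFreeAbove b l)
    (hz : ∀ l, XYFreeAbove a l → a (toLex (2, l)) = b (toLex (2, l))) (m : σv n →₀ ℕ) :
    weight (m + a) = weight (m + b) := by
  simp only [weight, blockDeg_add, indexDeg_add, hblock, hindex, Prod.mk.injEq, true_and]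
  funext l
  have hfree' : XYFreeAbove (m + a) l ↔ XYFreeAbove (m + b) l := by
    rw [xyFreeAbove_add, xyFreeAbove_add, hfree]
  by_cases h : XYFreeAbove (m + a) l
  · rw [tailZ, tailZ, if_pos h, if_pos (hfree'.mp h), Finsupp.add_apply, Finsupp.add_apply,
      hz l (xyFreeAbove_add.mp h).2]
  · rw [tailZ, tailZ, if_neg h, if_neg (mt hfree'.mpr h)]

theorem weight_add_xy (i j : Fin n) (m : σv n →₀ ℕ) :
    weight (m + (varExp 0 i + varExp 1 j)) = weight (m + (varExp 0 j + varExp 1 i)) := by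
  refine weight_add_eq_weight_add (by simp) (by simp [add_comm]) (by simp [and_comm]) ?_ m
  intro l _; simp

theorem weight_add_cubic {b w : Fin 3} (hb : b ≠ 2) (hw : w ≠ 2) {i j k : Fin n}
    (hij : i < j) (hjk : j < k) (m : σv n →₀ ℕ) :
    weight (m + (varExp b i + varExp 2 j + varExp w k)) =
      weight (m + (varExp 2 i + varExp b j + varExp w k)) := by
  have hfree : ∀ l, XYFreeAbove (varExp b i + varExp 2 j + varExp w k) l ↔ k ≤ l := by
    intro l; simp [hb, hw]; grind
  refine weight_add_eq_weight_add (by simp [add_comm]) (by simp [add_comm]) ?_ ?_ m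
  · intro l; rw [hfree]; simp [hb, hw]; grind
  · intro l hl
    rw [hfree] at hl
    simp [(hij.trans_le (hjk.le.trans hl)).ne, (hjk.trans_le hl).ne]

theorem fiberSum_weight_eq_zero {K : Type*} [Field K] {f : MvPolynomial (σv n) K}
    (hf : f ∈ Lideal K n) : fiberSum weight f = 0 := by
  refine fiberSum_eq_zero_of_mem_span ?_ hf
  rintro _ (⟨i, j, -, rfl⟩ | ⟨i, j, k, hij, hjk, rfl | rfl | rfl⟩) <;>
    simp only [Xv, Yv, Zv, X, monomial_mul, one_mul]
  · exact fiberSum_mul_monomial_sub_monomial (weight_add_xy i j)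
  all_goals
    exact fiberSum_mul_monomial_sub_monomial (weight_add_cubic (by decide) (by decide) hij hjk)

def IsStandard (d : σv n →₀ ℕ) : Prop :=
  (∀ i j, i < j → d (toLex (0, i)) = 0 ∨ d (toLex (1, j)) = 0) ∧
  (∀ i j k, i < j → j < k →
    d (toLex (0, i)) = 0 ∨ d (toLex (2, j)) = 0 ∨ d (toLex (0, k)) = 0) ∧
  (∀ i j k, i < j → j < k →
    d (toLex (1, i)) = 0 ∨ d (toLex (2, j)) = 0 ∨ d (toLex (1, k)) = 0) ∧
  (∀ i j k, i < j → j < k →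
    d (toLex (1, i)) = 0 ∨ d (toLex (2, j)) = 0 ∨ d (toLex (0, k)) = 0)

theorem IsStandard.xyFreeAbove {d : σv n →₀ ℕ} (hd : IsStandard d) {i k : Fin n}
    (hik : i < k) (hi : d (toLex (0, i)) ≠ 0 ∨ d (toLex (1, i)) ≠ 0)
    (hk : d (toLex (2, k)) ≠ 0) :
    XYFreeAbove d k := by
  obtain ⟨hxy, hxzx, hyzy, hyzx⟩ := hd
  intro t hkt
  rcases hi with hi | hi
  · exact ⟨((hxzx i k t hik hkt).resolve_left hi).resolve_left hk,
      (hxy i t (hik.trans hkt)).resolve_left hi⟩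
  · exact ⟨((hyzx i k t hik hkt).resolve_left hi).resolve_left hk,
      ((hyzy i k t hik hkt).resolve_left hi).resolve_left hk⟩

theorem le_of_tailZ_eq {d e : σv n →₀ ℕ} {k : Fin n} (hk : XYFreeAbove d k)
    (h : tailZ d k = tailZ e k) : d (toLex (2, k)) ≤ e (toLex (2, k)) := by
  rw [tailZ, if_pos hk] at h
  rw [h, tailZ]
  split_ifs <;> simp

theorem IsStandard.lt_of_weight_eq {d e : σv n →₀ ℕ} (hd : IsStandard d)
    (hw : weight d = weight e) (hne : d ≠ e) : toLex d < toLex e := by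
  simp only [weight, Prod.mk.injEq] at hw
  obtain ⟨hblock, hindex, htail⟩ := hw
  have hsum (l : Fin n) : d (toLex (0, l)) + d (toLex (1, l)) + d (toLex (2, l)) =
      e (toLex (0, l)) + e (toLex (1, l)) + e (toLex (2, l)) := by
    simpa [indexDeg, Fin.sum_univ_three] using congrFun hindex l
  refine lt_of_le_of_ne (not_lt.mp fun hlt => ?_) (toLex_inj.not.mpr hne)
  obtain ⟨⟨r, i⟩, hbelow, hlt⟩ := Finsupp.Lex.lt_iff.mp hlt
  replace hbelow (s : Fin 3) (l : Fin n) (h : toLex (s, l) < toLex (r, i)) :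
      e (toLex (s, l)) = d (toLex (s, l)) := hbelow _ h
  change e (toLex (r, i)) < d (toLex (r, i)) at hlt
  obtain rfl | rfl | rfl : r = 0 ∨ r = 1 ∨ r = 2 := by fin_cases r <;> simp
  -- In the `x`- and `y`-cases some later `x_k` resp. `y_k` is larger in `e`, so by the index
  -- degree at `k` the exponent of `z_k` is smaller in `e`; standardness makes `d` free of `x`
  -- and `y` above `k`, and then `tailZ` forbids the exponent of `z_k` to drop.
  · obtain ⟨k, hik, hk⟩ := Finset.exists_gt_lt_of_sum_eq (congrFun hblock 0) hlt
      fun l hl => (hbelow 0 l (by simpa [Prod.Lex.toLex_lt_toLex])).symm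
    have hyk : d (toLex (1, k)) = 0 := (hd.1 i k hik).resolve_left (by omega)
    have hzk : e (toLex (2, k)) < d (toLex (2, k)) := by have := hsum k; omega
    have := le_of_tailZ_eq (hd.xyFreeAbove hik (Or.inl (by omega)) (by omega)) (congrFun htail k)
    omega
  · obtain ⟨k, hik, hk⟩ := Finset.exists_gt_lt_of_sum_eq (congrFun hblock 1) hlt
      fun l hl => (hbelow 1 l (by simpa [Prod.Lex.toLex_lt_toLex])).symm
    have hxk : e (toLex (0, k)) = d (toLex (0, k)) :=
      hbelow 0 k (by simp [Prod.Lex.toLex_lt_toLex])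
    have hzk : e (toLex (2, k)) < d (toLex (2, k)) := by have := hsum k; omega
    have := le_of_tailZ_eq (hd.xyFreeAbove hik (Or.inr (by omega)) (by omega)) (congrFun htail k)
    omega
  · have hx := hbelow 0 i (by simp [Prod.Lex.toLex_lt_toLex])
    have hy := hbelow 1 i (by simp [Prod.Lex.toLex_lt_toLex])
    have := hsum i
    omega

theorem isStandard_of_monomial_notMem {K : Type*} [Field K] {d : σv n →₀ ℕ}
    (hd : monomial d (1 : K) ∉ Nideal K n) : IsStandard d := by
  have not_le {a : σv n →₀ ℕ} (ha : monomial a (1 : K) ∈ Nideal K n) : ¬a ≤ d :=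
    fun had => hd (Ideal.mem_of_dvd _ (monomial_dvd_monomial.mpr ⟨Or.inr had, one_dvd _⟩) ha)
  have cubic {b w : Fin 3} {i j k : Fin n} (hij : i < j) (hjk : j < k)
      (hN : X (toLex (b, i)) * X (toLex (2, j)) * X (toLex (w, k)) ∈ Nideal K n) :
      d (toLex (b, i)) = 0 ∨ d (toLex (2, j)) = 0 ∨ d (toLex (w, k)) = 0 := by
    simp only [X, monomial_mul, one_mul] at hN
    by_contra! h
    exact not_le hN (Finsupp.single_add_single_add_single_le (by simp [hij.ne])
      (by simp [(hij.trans hjk).ne]) (by simp [hjk.ne]) h.1 h.2.1 h.2.2)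
  refine ⟨fun i j hij => ?_, fun i j k hij hjk => cubic hij hjk ?_,
    fun i j k hij hjk => cubic hij hjk ?_, fun i j k hij hjk => cubic hij hjk ?_⟩
  · have hN : Xv K n i * Yv K n j ∈ Nideal K n := Ideal.subset_span (Or.inl ⟨i, j, hij, rfl⟩)
    simp only [Xv, Yv, X, monomial_mul, one_mul] at hN
    by_contra! h
    exact not_le hN (Finsupp.single_add_single_le (by simp) h.1 h.2)
  all_goals exact Ideal.subset_span (Or.inr ⟨i, j, k, hij, hjk, by simp [Xv, Yv, Zv]⟩)

theorem toLex_lt_toLex_xy {i j : Fin n} (hij : i < j) :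
    toLex (varExp 0 j + varExp 1 i) < toLex (varExp 0 i + varExp 1 j) :=
  Finsupp.toLex_single_add_single_lt (by simp [Prod.Lex.toLex_lt_toLex, hij])
    (by simp [Prod.Lex.toLex_lt_toLex]) (by simp [Prod.Lex.toLex_le_toLex])

theorem toLex_lt_toLex_cubic {b w : Fin 3} (hb : b ≠ 2) {i j k : Fin n} (hij : i < j) :
    toLex (varExp 2 i + varExp b j + varExp w k) <
      toLex (varExp b i + varExp 2 j + varExp w k) := by
  have hb2 : b < 2 := by omega
  exact add_lt_add_left (Finsupp.toLex_single_add_single_lt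
    (by simp [Prod.Lex.toLex_lt_toLex, hb2]) (by simp [Prod.Lex.toLex_lt_toLex, hij])
    (by simp [Prod.Lex.toLex_le_toLex, hb2])) _

theorem monomial_mem_initialIdeal {K : Type*} [Field K] {I : Ideal (MvPolynomial (σv n) K)}
    {a b : σv n →₀ ℕ} (hba : toLex b < toLex a) (hab : monomial a 1 - monomial b 1 ∈ I) :
    monomial a 1 ∈ initialIdeal K n I :=
  Ideal.subset_span ⟨_, hab, a, (mem_support_monomial_sub_monomial hba).1,
    (mem_support_monomial_sub_monomial hba).2, rfl⟩

theorem Xv_mul_Yv_mem_initialIdeal {K : Type*} [Field K] {i j : Fin n} (hij : i < j) :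
    Xv K n i * Yv K n j ∈ initialIdeal K n (Lideal K n) := by
  have hgen : Xv K n i * Yv K n j - Xv K n j * Yv K n i ∈ Lideal K n :=
    Ideal.subset_span (Or.inl ⟨i, j, hij, rfl⟩)
  simp only [Xv, Yv, X, monomial_mul, one_mul] at hgen ⊢
  exact monomial_mem_initialIdeal (toLex_lt_toLex_xy hij) hgen

theorem cubic_mem_initialIdeal {K : Type*} [Field K] {b w : Fin 3} (hb : b ≠ 2) {i j k : Fin n}
    (hij : i < j) (hgen : X (toLex (b, i)) * X (toLex (2, j)) * X (toLex (w, k)) -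
      X (toLex (2, i)) * X (toLex (b, j)) * X (toLex (w, k)) ∈ Lideal K n) :
    X (toLex (b, i)) * X (toLex (2, j)) * X (toLex (w, k)) ∈ initialIdeal K n (Lideal K n) := by
  simp only [X, monomial_mul, one_mul] at hgen ⊢
  exact monomial_mem_initialIdeal (toLex_lt_toLex_cubic hb hij) hgen

end LnGroebner

open LnGroebner

theorem stmt8 :
    initialIdeal K n (Lideal K n) = Nideal K n := by
  refine le_antisymm (Ideal.span_le.mpr ?_) (Ideal.span_le.mpr ?_)
  · rintro _ ⟨f, hf, d, hd, hmax, rfl⟩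
    by_contra hN
    obtain ⟨e, he, hed, hw⟩ :=
      exists_mem_support_ne_of_fiberSum_eq_zero (fiberSum_weight_eq_zero hf) hd
    exact (hmax e he).not_gt ((isStandard_of_monomial_notMem hN).lt_of_weight_eq hw.symm hed.symm)
  · rintro _ (⟨i, j, hij, rfl⟩ | ⟨i, j, k, hij, hjk, rfl | rfl | rfl⟩)
    · exact Xv_mul_Yv_mem_initialIdeal hij
    · exact cubic_mem_initialIdeal (by decide) hij
        (Ideal.subset_span (Or.inr ⟨i, j, k, hij, hjk, Or.inl rfl⟩))
    · exact cubic_mem_initialIdeal (by decide) hij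
        (Ideal.subset_span (Or.inr ⟨i, j, k, hij, hjk, Or.inr (Or.inl rfl)⟩))
    · exact cubic_mem_initialIdeal (by decide) hij
        (Ideal.subset_span (Or.inr ⟨i, j, k, hij, hjk, Or.inr (Or.inr rfl)⟩))
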